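/- Let a ≥ 2 and S, T, t ≥ 1 be integers, and write t = S·k − r with 0 ≤ r ≤ S − 1 (so k = ⌈t/S⌉). Suppose 1 ≤ k ≤ T. Let n ≥ 1 be an integer, and define A_1, ..., A_T by A_j = n·a^r·(coeff of x^{k−1} in ∏_{h≠j}(x−h))/∏_{h≠j}(j−h). Then n/a^t = ∑_{j=1}^T A_j/(a^S − j) − E where E = ∑_{j=T+1}^∞ B_j/a^{Sj} with B_j = ∑_{i=1}^T A_i·i^{j−1}, provided a^S > T so all series converge. -/

import Mathlib

/-!
With `q = a ^ S`, each `A i / (q - i)` expands as the geometric series `∑ₘ A i * i ^ m / q ^ (m + 1)`,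
so `∑ᵢ A i / (q - i) = ∑ₘ Bₘ₊₁ / q ^ (m + 1)` with `Bₘ₊₁ = ∑ᵢ A i * i ^ m`. Up to the factor `n * a ^ r`,
the `A i` are the coefficients of `X ^ (k - 1)` in the Lagrange basis on the nodes `1, …, T`, that is,
a row of the inverse Vandermonde matrix. Hence among the first `T` moments only `Bₖ = n * a ^ r` survives,
the first `T` terms of the series add up to `n * a ^ r / a ^ (S * k) = n / a ^ t`, and what is left is `E`.
-/

open Polynomial Finset

namespace Lagrange

variable {F ι : Type*} [Field F] [DecidableEq ι] {s : Finset ι} {v : ι → F}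

theorem basis_eq_C_nodalWeight_mul_nodal_erase (s : Finset ι) (v : ι → F) (i : ι) :
    Lagrange.basis s v i = C (nodalWeight s v i) * nodal (s.erase i) v := by
  simp_rw [Lagrange.basis, basisDivisor, nodalWeight, prod_mul_distrib, map_prod, nodal]

theorem coeff_basis (s : Finset ι) (v : ι → F) (i : ι) (l : ℕ) :
    (Lagrange.basis s v i).coeff l =
      (∏ j ∈ s.erase i, (X - C (v j))).coeff l / ∏ j ∈ s.erase i, (v i - v j) := by
  rw [basis_eq_C_nodalWeight_mul_nodal_erase, coeff_C_mul, nodalWeight, prod_inv_distrib,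
    nodal, div_eq_inv_mul]

theorem sum_eval_mul_coeff_basis (hvs : Set.InjOn v s) {P : F[X]} (hP : P.degree < #s) (l : ℕ) :
    ∑ i ∈ s, P.eval (v i) * (Lagrange.basis s v i).coeff l = P.coeff l := by
  conv_rhs => rw [eq_interpolate hvs hP, interpolate_apply, finsetSum_coeff]
  simp only [coeff_C_mul]

/-- The coefficients of the Lagrange basis form the inverse of the Vandermonde matrix. -/
theorem sum_pow_mul_coeff_basis (hvs : Set.InjOn v s) {m : ℕ} (hm : m < #s) (l : ℕ) :
    ∑ i ∈ s, v i ^ m * (Lagrange.basis s v i).coeff l = if l = m then 1 else 0 := by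
  have hdeg : (X ^ m : F[X]).degree < #s := by
    rw [degree_X_pow]
    exact_mod_cast hm
  simpa only [eval_pow, eval_X, coeff_X_pow] using sum_eval_mul_coeff_basis hvs hdeg l

end Lagrange

theorem hasSum_pow_div_pow_succ {𝕜 : Type*} [NormedField 𝕜] {x q : 𝕜} (h : ‖x‖ < ‖q‖) :
    HasSum (fun m : ℕ => x ^ m / q ^ (m + 1)) (q - x)⁻¹ := by
  have hq : q ≠ 0 := norm_pos_iff.mp ((norm_nonneg x).trans_lt h)
  have hqx : q - x ≠ 0 := sub_ne_zero.mpr fun hxq => h.ne (hxq ▸ rfl)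
  have hratio : ‖x / q‖ < 1 := by
    rwa [norm_div, div_lt_one ((norm_nonneg x).trans_lt h)]
  have hterm : (fun m : ℕ => x ^ m / q ^ (m + 1)) = fun m => q⁻¹ * (x / q) ^ m := by
    funext m
    rw [div_pow, pow_succ]
    field_simp
  have hlimit : (q - x)⁻¹ = q⁻¹ * (1 - x / q)⁻¹ := by
    field_simp
  rw [hterm, hlimit]
  exact (hasSum_geometric_of_norm_lt_one hratio).mul_left q⁻¹

theorem hasSum_sum_mul_pow_div_pow_succ {𝕜 ι : Type*} [NormedField 𝕜] {s : Finset ι}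
    {c x : ι → 𝕜} {q : 𝕜} (h : ∀ i ∈ s, ‖x i‖ < ‖q‖) :
    HasSum (fun m : ℕ => (∑ i ∈ s, c i * x i ^ m) / q ^ (m + 1)) (∑ i ∈ s, c i / (q - x i)) := by
  simp only [sum_div, mul_div_assoc, div_eq_mul_inv (c _)]
  exact hasSum_sum fun i hi => (hasSum_pow_div_pow_succ (h i hi)).mul_left (c i)

theorem sum_mul_pow_eq_ite {T k : ℕ} {c : ℝ} {A : ℕ → ℝ}
    (hA : ∀ j, 1 ≤ j → j ≤ T →
      A j = c * (∏ h ∈ (Icc 1 T).erase j, (X - C (h : ℝ))).coeff (k - 1) /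
        ∏ h ∈ (Icc 1 T).erase j, ((j : ℝ) - (h : ℝ)))
    {m : ℕ} (hm : m < T) :
    ∑ i ∈ Icc 1 T, A i * (i : ℝ) ^ m = if m = k - 1 then c else 0 := by
  have hinj : Set.InjOn (Nat.cast : ℕ → ℝ) (Icc 1 T) := Nat.cast_injective.injOn
  have hcard : m < #(Icc 1 T) := by rwa [Nat.card_Icc, Nat.add_sub_cancel]
  have hA' : ∀ i ∈ Icc 1 T, A i * (i : ℝ) ^ m =
      c * ((i : ℝ) ^ m * (Lagrange.basis (Icc 1 T) Nat.cast i).coeff (k - 1)) := by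
    intro i hi
    obtain ⟨hi1, hiT⟩ := mem_Icc.mp hi
    rw [hA i hi1 hiT, Lagrange.coeff_basis, mul_div_assoc]
    ring
  rw [sum_congr rfl hA', ← mul_sum, Lagrange.sum_pow_mul_coeff_basis hinj hcard,
    mul_ite, mul_one, mul_zero]
  simp only [eq_comm]

theorem stmt17_general (a S T t k r n : ℕ)
    (hkr : S * k = t + r) (hk1 : 1 ≤ k) (hkT : k ≤ T)
    (haS : (T : ℝ) < (a : ℝ) ^ S)
    (A : ℕ → ℝ)
    (hA : ∀ j, 1 ≤ j → j ≤ T →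
      A j = (n : ℝ) * (a : ℝ) ^ r *
          ((∏ h ∈ (Finset.Icc 1 T).erase j,
              (Polynomial.X - Polynomial.C (h : ℝ))).coeff (k - 1)) /
          ∏ h ∈ (Finset.Icc 1 T).erase j, ((j : ℝ) - (h : ℝ))) :
    Summable (fun m : ℕ =>
      (∑ i ∈ Finset.Icc 1 T, A i * (i : ℝ) ^ (T + 1 + m - 1)) /
        (a : ℝ) ^ (S * (T + 1 + m))) ∧
    (n : ℝ) / (a : ℝ) ^ t =
      (∑ j ∈ Finset.Icc 1 T, A j / ((a : ℝ) ^ S - (j : ℝ))) -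
        ∑' m : ℕ,
          (∑ i ∈ Finset.Icc 1 T, A i * (i : ℝ) ^ (T + 1 + m - 1)) /
            (a : ℝ) ^ (S * (T + 1 + m)) := by
  set term : ℕ → ℝ := fun m => (∑ i ∈ Icc 1 T, A i * (i : ℝ) ^ m) / (a : ℝ) ^ (S * (m + 1))
  have hsum : HasSum term (∑ j ∈ Icc 1 T, A j / ((a : ℝ) ^ S - j)) := by
    have hnodes : ∀ i ∈ Icc 1 T, ‖(i : ℝ)‖ < ‖(a : ℝ) ^ S‖ := fun i hi => by
      rw [Real.norm_natCast, Real.norm_of_nonneg (haS.le.trans' (Nat.cast_nonneg T))]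
      exact haS.trans_le' (by exact_mod_cast (mem_Icc.mp hi).2)
    simpa only [term, pow_mul] using hasSum_sum_mul_pow_div_pow_succ (c := A) hnodes
  have hhead : ∑ m ∈ range T, term m = n / (a : ℝ) ^ t := by
    have har : (a : ℝ) ^ r ≠ 0 := by
      have : (a : ℝ) ^ t * (a : ℝ) ^ r ≠ 0 := by
        rw [← pow_add, ← hkr, pow_mul]
        exact pow_ne_zero k ((Nat.cast_nonneg T).trans_lt haS).ne'
      exact right_ne_zero_of_mul this
    simp only [term]
    rw [sum_congr rfl fun m hm => by rw [sum_mul_pow_eq_ite hA (mem_range.mp hm), ite_div, zero_div],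
      sum_ite_eq' (range T) (k - 1), if_pos (mem_range.mpr (by omega)), Nat.sub_add_cancel hk1,
      hkr, pow_add, mul_div_mul_right _ _ har]
  have htail := (hasSum_nat_add_iff' T).mpr hsum
  rw [hhead] at htail
  have hshift : (fun m => term (m + T)) = fun m : ℕ =>
      (∑ i ∈ Icc 1 T, A i * (i : ℝ) ^ (T + 1 + m - 1)) / (a : ℝ) ^ (S * (T + 1 + m)) := by
    funext m
    rw [show T + 1 + m - 1 = m + T by omega, show T + 1 + m = m + T + 1 by omega]
  rw [hshift] at htail
  exact ⟨htail.summable, by rw [htail.tsum_eq]; ring⟩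

theorem stmt17 (a S T t k r n : ℕ)
    (ha : 2 ≤ a) (hS : 1 ≤ S) (hT : 1 ≤ T) (ht : 1 ≤ t) (hn : 1 ≤ n)
    (hkr : S * k = t + r) (hr : r ≤ S - 1) (hk1 : 1 ≤ k) (hkT : k ≤ T)
    (haS : (T : ℝ) < (a : ℝ) ^ S)
    (A : ℕ → ℝ)
    (hA : ∀ j, 1 ≤ j → j ≤ T →
      A j = (n : ℝ) * (a : ℝ) ^ r *
          ((∏ h ∈ (Finset.Icc 1 T).erase j,
              (Polynomial.X - Polynomial.C (h : ℝ))).coeff (k - 1)) /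
          ∏ h ∈ (Finset.Icc 1 T).erase j, ((j : ℝ) - (h : ℝ))) :
    Summable (fun m : ℕ =>
      (∑ i ∈ Finset.Icc 1 T, A i * (i : ℝ) ^ (T + 1 + m - 1)) /
        (a : ℝ) ^ (S * (T + 1 + m))) ∧
    (n : ℝ) / (a : ℝ) ^ t =
      (∑ j ∈ Finset.Icc 1 T, A j / ((a : ℝ) ^ S - (j : ℝ))) -
        ∑' m : ℕ,
          (∑ i ∈ Finset.Icc 1 T, A i * (i : ℝ) ^ (T + 1 + m - 1)) /
            (a : ℝ) ^ (S * (T + 1 + m)) :=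
  stmt17_general a S T t k r n hkr hk1 hkT haS A hA
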